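/- arXiv:1409.1631 — 3 statements merged into one kernel-verified Lean document; each statement's English description precedes it below -/
import Mathlib

section
/- Let {X_n} be a sequence of complex-valued random variables on a common probability space, and let F_n denote the distribution function of |X_n|. Suppose there exist N ∈ ℕ, a real number a > 1, and a decreasing function f : [a,∞) → [0,1] such that ∫_a^∞ f(x)/x dx < ∞ and 1 − F_n(x) ≤ f(x) for all x ∈ [a,∞) and all n ≥ N. Then limsup_{n→∞} |X_n|^{1/n} ≤ 1 almost surely. -/
/-!
For `c > 1` the events `{|Xₙ| > cⁿ}` have probabilities at most `f (cⁿ)` for large `n`, and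
`∑ f (cⁿ)` converges: since `f` is decreasing, `f (cⁿ⁺¹) log c ≤ ∫_{cⁿ}^{cⁿ⁺¹} f(x)/x dx`.
By Borel–Cantelli, almost surely `|Xₙ| ≤ cⁿ` eventually, so `limsup |Xₙ|^{1/n} ≤ c`; letting
`c ↓ 1` along a countable family gives the claim.
-/

open MeasureTheory Filter Set Real
open scoped ENNReal

lemma mul_log_le_integral_div {f : ℝ → ℝ} {t c : ℝ} (ht : 0 < t) (hc : 1 ≤ c)
    (hf : AntitoneOn f (Icc t (c * t)))
    (hfi : IntervalIntegrable (fun x => f x / x) volume t (c * t)) :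
    f (c * t) * log c ≤ ∫ x in t..c * t, f x / x := by
  have htc : t ≤ c * t := le_mul_of_one_le_left ht.le hc
  have h0 : (0 : ℝ) ∉ uIcc t (c * t) := by
    rw [uIcc_of_le htc]
    exact fun h => ht.not_ge h.1
  calc f (c * t) * log c = ∫ x in t..c * t, f (c * t) * (1 / x) := by
        rw [intervalIntegral.integral_const_mul, integral_one_div h0,
          mul_div_cancel_right₀ _ ht.ne']
    _ ≤ ∫ x in t..c * t, f x / x := by
        refine intervalIntegral.integral_mono_on htc ?_ hfi fun x hx => ?_
        · refine ContinuousOn.intervalIntegrable (continuousOn_const.mul ?_)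
          exact continuousOn_const.div continuousOn_id fun x hx => by rintro rfl; exact h0 hx
        · rw [mul_one_div]
          exact div_le_div_of_nonneg_right (hf hx ⟨htc, le_rfl⟩ hx.2) (ht.trans_le hx.1).le

lemma summable_comp_geometric_of_integrableOn_div {f : ℝ → ℝ} {t c : ℝ} (ht : 0 < t)
    (hc : 1 < c) (hf_anti : AntitoneOn f (Ici t)) (hf_nonneg : ∀ x ∈ Ici t, 0 ≤ f x)
    (hf_int : IntegrableOn (fun x => f x / x) (Ici t)) :
    Summable fun k : ℕ => f (c ^ k * t) := by
  set u : ℕ → ℝ := fun k => c ^ k * t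
  have hu_ge : ∀ k, t ≤ u k := fun k => le_mul_of_one_le_left ht.le (one_le_pow₀ hc.le)
  have hu_succ : ∀ k, u (k + 1) = c * u k := fun k => by simp only [u, pow_succ', mul_assoc]
  have hu_mono : Monotone u := fun k l hkl =>
    mul_le_mul_of_nonneg_right (pow_le_pow_right₀ hc.le hkl) ht.le
  have hint : ∀ k, IntervalIntegrable (fun x => f x / x) volume (u k) (u (k + 1)) := fun k => by
    refine (hf_int.mono_set ?_).intervalIntegrable
    rw [uIcc_of_le (hu_mono k.le_succ)]
    exact Icc_subset_Ici_self.trans (Ici_subset_Ici.2 (hu_ge k))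
  have hterm : ∀ k, f (u (k + 1)) * log c ≤ ∫ x in u k..u (k + 1), f x / x := fun k => by
    have hk := hint k
    rw [hu_succ] at hk ⊢
    exact mul_log_le_integral_div (ht.trans_le (hu_ge k)) hc.le
      (hf_anti.mono fun x hx => (hu_ge k).trans hx.1) hk
  have hpartial : ∀ K, ∫ x in u 0..u K, f x / x ≤ ∫ x in Ici t, f x / x := fun K => by
    rw [intervalIntegral.integral_of_le (hu_mono K.zero_le)]
    refine setIntegral_mono_set hf_int ?_
      (Ioc_subset_Ioi_self.trans (Ioi_subset_Ici (hu_ge 0))).eventuallyLE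
    filter_upwards [self_mem_ae_restrict measurableSet_Ici] with x (hx : t ≤ x)
    exact div_nonneg (hf_nonneg x hx) (ht.le.trans hx)
  rw [← summable_nat_add_iff 1, ← summable_mul_right_iff (log_pos hc).ne']
  refine summable_of_sum_range_le (c := ∫ x in Ici t, f x / x)
    (fun k => mul_nonneg (hf_nonneg _ (hu_ge _)) (log_pos hc).le) fun K => ?_
  calc ∑ k ∈ Finset.range K, f (u (k + 1)) * log c
      ≤ ∑ k ∈ Finset.range K, ∫ x in u k..u (k + 1), f x / x :=
        Finset.sum_le_sum fun k _ => hterm k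
    _ = ∫ x in u 0..u K, f x / x :=
        intervalIntegral.sum_integral_adjacent_intervals fun k _ => hint k
    _ ≤ ∫ x in Ici t, f x / x := hpartial K

lemma summable_comp_pow_of_integrableOn_div {f : ℝ → ℝ} {a c : ℝ} (hc : 1 < c)
    (hf_anti : AntitoneOn f (Ici a)) (hf_nonneg : ∀ x ∈ Ici a, 0 ≤ f x)
    (hf_int : IntegrableOn (fun x => f x / x) (Ici a)) :
    Summable fun n : ℕ => f (c ^ n) := by
  obtain ⟨m, hm⟩ := pow_unbounded_of_one_lt a hc
  have hsub : Ici (c ^ m) ⊆ Ici a := Ici_subset_Ici.2 hm.le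
  rw [← summable_nat_add_iff m]
  simpa only [pow_add] using summable_comp_geometric_of_integrableOn_div (by positivity) hc
    (hf_anti.mono hsub) (fun x hx => hf_nonneg x (hsub hx)) (hf_int.mono_set hsub)

lemma limsup_rpow_one_div_le_of_eventually_le_pow {u : ℕ → ℝ} (hu : ∀ n, 0 ≤ u n) {c : ℝ}
    (hc : 0 ≤ c) (h : ∀ᶠ n in atTop, u n ≤ c ^ n) :
    limsup (fun n : ℕ => u n ^ (1 / (n : ℝ))) atTop ≤ c := by
  refine limsup_le_of_le (isCoboundedUnder_le_of_le atTop fun n => rpow_nonneg (hu n) _) ?_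
  filter_upwards [h, eventually_ne_atTop 0] with n hn hn0
  calc u n ^ (1 / (n : ℝ)) ≤ (c ^ n) ^ (1 / (n : ℝ)) := rpow_le_rpow (hu n) hn (by positivity)
    _ = c := by rw [one_div, pow_rpow_inv_natCast hc hn0]

lemma ae_eventually_le_pow_of_tail_le {Ω : Type*} [MeasurableSpace Ω] {μ : Measure Ω}
    [IsProbabilityMeasure μ] {Y : ℕ → Ω → ℝ} (hY : ∀ n, Measurable (Y n)) {N : ℕ} {a : ℝ}
    {f : ℝ → ℝ} (hf_anti : AntitoneOn f (Ici a)) (hf_nonneg : ∀ x ∈ Ici a, 0 ≤ f x)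
    (hf_int : IntegrableOn (fun x => f x / x) (Ici a))
    (htail : ∀ n, N ≤ n → ∀ x ∈ Ici a, 1 - (μ {ω | Y n ω ≤ x}).toReal ≤ f x)
    {c : ℝ} (hc : 1 < c) :
    ∀ᵐ ω ∂μ, ∀ᶠ n in atTop, Y n ω ≤ c ^ n := by
  set A : ℕ → Set Ω := fun n => {ω | c ^ n < Y n ω}
  have hA : ∀ᶠ n in atTop, ‖μ.real (A n)‖ ≤ f (c ^ n) := by
    filter_upwards [eventually_ge_atTop N,
      (tendsto_pow_atTop_atTop_of_one_lt hc).eventually_ge_atTop a] with n hN ha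
    have hcompl : A n = {ω | Y n ω ≤ c ^ n}ᶜ := by ext; simp [A]
    rw [norm_of_nonneg measureReal_nonneg, hcompl,
      probReal_compl_eq_one_sub (measurableSet_le (hY n) measurable_const)]
    exact htail n hN _ ha
  have hsum : Summable fun n => μ.real (A n) :=
    (summable_comp_pow_of_integrableOn_div hc hf_anti hf_nonneg hf_int
      ).of_norm_bounded_eventually_nat hA
  have hsum_ne_top : ∑' n, μ (A n) ≠ ∞ := by
    have hofReal : ∀ n, μ (A n) = ENNReal.ofReal (μ.real (A n)) := fun n =>
      (ofReal_measureReal).symm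
    rw [tsum_congr hofReal, ← ENNReal.ofReal_tsum_of_nonneg (fun _ => measureReal_nonneg) hsum]
    exact ENNReal.ofReal_ne_top
  filter_upwards [ae_eventually_notMem hsum_ne_top] with ω hω
  exact hω.mono fun n hn => not_lt.1 hn

theorem limsup_abs_rpow_le_one_general
    {Ω : Type*} [MeasurableSpace Ω] (μ : Measure Ω) [IsProbabilityMeasure μ]
    (X : ℕ → Ω → ℂ) (hX : ∀ n, Measurable (X n))
    (N : ℕ) (a : ℝ) (f : ℝ → ℝ)
    (hf_anti : AntitoneOn f (Set.Ici a))
    (hf_mem : ∀ x ∈ Set.Ici a, f x ∈ Set.Icc (0 : ℝ) 1)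
    (hf_int : IntegrableOn (fun x => f x / x) (Set.Ici a))
    (htail : ∀ n, N ≤ n → ∀ x ∈ Set.Ici a,
      1 - (μ {ω | ‖X n ω‖ ≤ x}).toReal ≤ f x) :
    ∀ᵐ ω ∂μ,
      limsup (fun n : ℕ => ‖X n ω‖ ^ (1 / (n : ℝ))) atTop ≤ 1 := by
  refine eventually_le_const_iff_forall_gt_eventually_lt_const.2 fun b hb => ?_
  obtain ⟨c, hc, hcb⟩ := exists_between hb
  filter_upwards [ae_eventually_le_pow_of_tail_le (fun n => (hX n).norm) hf_anti
    (fun x hx => (hf_mem x hx).1) hf_int htail hc] with ω hω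
  exact (limsup_rpow_one_div_le_of_eventually_le_pow (fun n => norm_nonneg _)
    (zero_le_one.trans hc.le) hω).trans_lt hcb

/-- If the distribution functions `Fₙ(x) = μ {|Xₙ| ≤ x}` of the moduli of a
sequence of complex random variables satisfy the uniform tail bound
`1 - Fₙ(x) ≤ f(x)` on `[a, ∞)` for all `n ≥ N`, where `f : [a,∞) → [0,1]` is decreasing with
`∫_a^∞ f(x)/x dx < ∞`, then `limsup_{n→∞} |Xₙ|^{1/n} ≤ 1` almost surely. -/
theorem limsup_abs_rpow_le_one
    {Ω : Type*} [MeasurableSpace Ω] (μ : Measure Ω) [IsProbabilityMeasure μ]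
    (X : ℕ → Ω → ℂ) (hX : ∀ n, Measurable (X n))
    (N : ℕ) (a : ℝ) (ha : 1 < a) (f : ℝ → ℝ)
    (hf_anti : AntitoneOn f (Set.Ici a))
    (hf_mem : ∀ x ∈ Set.Ici a, f x ∈ Set.Icc (0 : ℝ) 1)
    (hf_int : IntegrableOn (fun x => f x / x) (Set.Ici a))
    (htail : ∀ n, N ≤ n → ∀ x ∈ Set.Ici a,
      1 - (μ {ω | ‖X n ω‖ ≤ x}).toReal ≤ f x) :
    ∀ᵐ ω ∂μ,
      limsup (fun n : ℕ => ‖X n ω‖ ^ (1 / (n : ℝ))) atTop ≤ 1 :=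
  limsup_abs_rpow_le_one_general μ X hX N a f hf_anti hf_mem hf_int htail
end

section
/- Let A_{k,n}, 0 ≤ k ≤ n, n ∈ ℕ, be a triangular array of complex-valued random variables on a common probability space, and let F_{k,n} denote the distribution function of |A_{k,n}|. Suppose Assumption 1* holds: there is N ∈ ℕ such that the random variables |A_{0,n}|, …, |A_{n,n}| are jointly independent for each n ≥ N, and there exist a > 1 and a function f : [a,∞) → [0,1] such that f(x)·log x is decreasing, ∫_a^∞ f(x)·(log x)/x dx < ∞, and 1 − F_{k,n}(x) ≤ f(x) for all x ∈ [a,∞), all 0 ≤ k ≤ n, and all n ≥ N. Suppose also Assumption 2* holds: there exist N' ∈ ℕ, 0 < b < 1, and an increasing function g : [0,b] → [0,1] such that ∫_0^b g(x)/x dx < ∞ and F_{k,n}(x) ≤ g(x) for all x ∈ [0,b], all 0 ≤ k ≤ n, and all n ≥ N'. Then lim_{n→∞} max_{0≤k≤n} |A_{k,n}|^{1/n} = 1 almost surely. -/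
/-!
For `c > 1`, the union bound gives `P(max_k |A_{k,n}| > c^n) ≤ (n+1) f(c^n)`, and
`n f(c^n) = f(c^n) log(c^n) / log c` is summable: on each block `[c^n, c^{n+1}]` the antitone
function `f log` is at least its value at the right end, so the series is dominated by
`∫_a^∞ f(x) log x / x dx`. For `0 < c < 1`, independence gives
`P(max_k |A_{k,n}| ≤ c^n) ≤ g(c^n)^{n+1}`, and `g(x) log(b/x) ≤ ∫_0^b g(t)/t dt` forces
`g(x) → 0` as `x → 0⁺`, so these probabilities are eventually geometric. Borel–Cantelli along
rational `c` then squeezes the `n`-th root of the maximum between any rationals `c < 1 < c'`.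
-/

open MeasureTheory Filter Set Real ProbabilityTheory Topology

lemma mul_log_div_le_integral_div {h : ℝ → ℝ} {u v K : ℝ} (hu : 0 < u) (huv : u ≤ v)
    (hK : ∀ t ∈ Icc u v, K ≤ h t) (hint : IntervalIntegrable (fun t => h t / t) volume u v) :
    K * log (v / u) ≤ ∫ t in u..v, h t / t := by
  have hinv : ContinuousOn (fun t : ℝ => t⁻¹) (uIcc u v) :=
    continuousOn_inv₀.mono fun t ht => (hu.trans_le (by simpa [huv] using ht.1)).ne'
  calc K * log (v / u) = ∫ t in u..v, K * t⁻¹ := by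
        rw [intervalIntegral.integral_const_mul, integral_inv_of_pos hu (hu.trans_le huv)]
    _ ≤ ∫ t in u..v, h t / t :=
        intervalIntegral.integral_mono_on huv (hinv.intervalIntegrable.const_mul K) hint
          fun t ht => by
            rw [div_eq_mul_inv]
            exact mul_le_mul_of_nonneg_right (hK t ht) (inv_nonneg.2 (hu.le.trans ht.1))

lemma summable_comp_pow_of_antitoneOn {a c : ℝ} (ha : 0 < a) (hc : 1 < c) {F : ℝ → ℝ}
    (hF_nonneg : ∀ x ∈ Ici a, 0 ≤ F x) (hF_anti : AntitoneOn F (Ici a))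
    (hF_int : IntegrableOn (fun x => F x / x) (Ici a)) :
    Summable fun n : ℕ => F (c ^ n) := by
  obtain ⟨m, hm⟩ := pow_unbounded_of_one_lt a hc
  have hle : ∀ n, m ≤ n → a ≤ c ^ n := fun n hn => hm.le.trans (pow_le_pow_right₀ hc.le hn)
  have hint : ∀ u v, a ≤ u → a ≤ v → IntervalIntegrable (fun x => F x / x) volume u v :=
    fun u v hu hv => intervalIntegrable_iff.2
      (hF_int.mono_set fun x hx => (le_min hu hv).trans hx.1.le)
  have hstep : ∀ n, m ≤ n → F (c ^ (n + 1)) * log c ≤ ∫ x in c ^ n..c ^ (n + 1), F x / x := by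
    intro n hn
    have hcn : 0 < c ^ n := pow_pos (by linarith) n
    have hratio : c ^ (n + 1) / c ^ n = c := by rw [pow_succ, mul_div_cancel_left₀ _ hcn.ne']
    have := mul_log_div_le_integral_div hcn (pow_le_pow_right₀ hc.le n.le_succ)
      (fun t ht => hF_anti (hle n hn |>.trans ht.1) (hle _ (by omega)) ht.2)
      (hint _ _ (hle n hn) (hle _ (by omega)))
    rwa [hratio] at this
  have hpartial : ∀ M, ∑ i ∈ Finset.range M, F (c ^ (m + i + 1))
      ≤ (∫ x in Ici a, F x / x) / log c := by
    intro M
    rw [le_div_iff₀ (log_pos hc), Finset.sum_mul]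
    calc ∑ i ∈ Finset.range M, F (c ^ (m + i + 1)) * log c
        ≤ ∑ i ∈ Finset.range M, ∫ x in c ^ (m + i)..c ^ (m + i + 1), F x / x :=
          Finset.sum_le_sum fun i _ => hstep _ (by omega)
      _ = ∫ x in c ^ (m + 0)..c ^ (m + M), F x / x :=
          intervalIntegral.sum_integral_adjacent_intervals fun i _ =>
            hint _ _ (hle _ (by omega)) (hle _ (by omega))
      _ ≤ ∫ x in Ici a, F x / x := by
          rw [intervalIntegral.integral_of_le (pow_le_pow_right₀ hc.le (by omega))]
          exact setIntegral_mono_set hF_int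
            ((ae_restrict_iff' measurableSet_Ici).2 (ae_of_all _ fun x hx =>
              div_nonneg (hF_nonneg x hx) (ha.le.trans hx)))
            (show Ioc _ _ ⊆ Ici a from fun x hx => (hle _ (by omega)).trans hx.1.le).eventuallyLE
  refine (summable_nat_add_iff (m + 1)).1 ?_
  simpa only [add_comm _ m, ← add_assoc] using summable_of_sum_range_le
    (fun i => hF_nonneg _ (hle _ (by omega))) hpartial

lemma summable_natCast_mul_comp_pow {a c : ℝ} (ha : 1 ≤ a) (hc : 1 < c) {f : ℝ → ℝ}
    (hf_nonneg : ∀ x ∈ Ici a, 0 ≤ f x) (hf_anti : AntitoneOn (fun x => f x * log x) (Ici a))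
    (hf_int : IntegrableOn (fun x => f x * log x / x) (Ici a)) :
    Summable fun n : ℕ => (n : ℝ) * f (c ^ n) := by
  have hF := summable_comp_pow_of_antitoneOn (by linarith) hc
    (fun x hx => mul_nonneg (hf_nonneg x hx) (log_nonneg (ha.trans hx))) hf_anti hf_int
  refine (hF.div_const (log c)).congr fun n => ?_
  rw [log_pow]
  field_simp [(log_pos hc).ne']

lemma tendsto_nhdsGT_zero_of_monotoneOn_of_integrableOn_div {b : ℝ} (hb : 0 < b) {g : ℝ → ℝ}
    (hg_mono : MonotoneOn g (Ioc 0 b)) (hg_nonneg : ∀ x ∈ Ioc 0 b, 0 ≤ g x)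
    (hg_int : IntegrableOn (fun x => g x / x) (Ioc 0 b)) :
    Tendsto g (𝓝[>] 0) (𝓝 0) := by
  set I := ∫ t in Ioc 0 b, g t / t
  have hbound : ∀ x ∈ Ioo 0 b, g x ≤ I / log (b / x) := by
    intro x hx
    rw [le_div_iff₀ (log_pos ((one_lt_div hx.1).2 hx.2))]
    calc g x * log (b / x) ≤ ∫ t in x..b, g t / t :=
          mul_log_div_le_integral_div hx.1 hx.2.le
            (fun t ht => hg_mono ⟨hx.1, hx.2.le⟩ ⟨hx.1.trans_le ht.1, ht.2⟩ ht.1)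
            ((intervalIntegrable_iff_integrableOn_Ioc_of_le hx.2.le).2
              (hg_int.mono_set (Ioc_subset_Ioc_left hx.1.le)))
      _ ≤ I := by
          rw [intervalIntegral.integral_of_le hx.2.le]
          exact setIntegral_mono_set hg_int
            ((ae_restrict_iff' measurableSet_Ioc).2 (ae_of_all _ fun t ht =>
              div_nonneg (hg_nonneg t ht) ht.1.le))
            (Ioc_subset_Ioc_left hx.1.le).eventuallyLE
  have hlog : Tendsto (fun x => log (b / x)) (𝓝[>] 0) atTop :=
    tendsto_log_atTop.comp (tendsto_inv_nhdsGT_zero.const_mul_atTop hb)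
  refine tendsto_of_tendsto_of_tendsto_of_le_of_le' tendsto_const_nhds
    (tendsto_const_nhds.div_atTop hlog : Tendsto (fun x => I / log (b / x)) _ (𝓝 0)) ?_ ?_
  · filter_upwards [Ioo_mem_nhdsGT hb] with x hx using hg_nonneg x ⟨hx.1, hx.2.le⟩
  · filter_upwards [Ioo_mem_nhdsGT hb] with x hx using hbound x hx

lemma tendsto_rpow_one_div_of_pow_bounds {u : ℕ → ℝ}
    (hupper : ∀ q : ℚ, 1 < (q : ℝ) → ∀ᶠ n in atTop, u n ≤ (q : ℝ) ^ n)
    (hlower : ∀ q : ℚ, 0 < (q : ℝ) → (q : ℝ) < 1 → ∀ᶠ n in atTop, (q : ℝ) ^ n < u n) :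
    Tendsto (fun n : ℕ => u n ^ (1 / (n : ℝ))) atTop (𝓝 1) := by
  have hroot : ∀ {q : ℝ}, 0 ≤ q → ∀ᶠ n : ℕ in atTop, (q ^ n) ^ (1 / (n : ℝ)) = q :=
    fun hq => (eventually_ne_atTop 0).mono fun n hn => by rw [one_div, pow_rpow_inv_natCast hq hn]
  rw [tendsto_order]
  constructor
  · intro y hy
    obtain ⟨q, hyq, hq1⟩ := exists_rat_btwn (max_lt hy zero_lt_one)
    have hq0 : (0 : ℝ) < q := (le_max_right _ _).trans_lt hyq
    filter_upwards [hlower q hq0 hq1, hroot hq0.le] with n hn hqn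
    calc y < q := (le_max_left _ _).trans_lt hyq
      _ = (q ^ n) ^ (1 / (n : ℝ)) := hqn.symm
      _ ≤ u n ^ (1 / (n : ℝ)) := rpow_le_rpow (by positivity) hn.le (by positivity)
  · intro y hy
    obtain ⟨q, h1q, hqy⟩ := exists_rat_btwn hy
    -- `rpow` is monotone only on nonnegative bases
    have hpos : ∀ᶠ n in atTop, 0 < u n :=
      (hlower (1 / 2) (by norm_num) (by norm_num)).mono fun n hn =>
        (pow_pos (by norm_num) n).trans hn
    filter_upwards [hupper q h1q, hroot (zero_le_one.trans h1q.le), hpos] with n hn hqn hun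
    calc u n ^ (1 / (n : ℝ)) ≤ (q ^ n) ^ (1 / (n : ℝ)) := rpow_le_rpow hun.le hn (by positivity)
      _ = q := hqn
      _ < y := hqy

section BorelCantelli

variable {Ω : Type*} [MeasurableSpace Ω] {μ : Measure Ω} [IsFiniteMeasure μ]

lemma ae_eventually_notMem_of_summable {s : ℕ → Set Ω} {w : ℕ → ℝ} (hw : Summable w)
    (hs : ∀ᶠ n in atTop, μ.real (s n) ≤ w n) : ∀ᵐ ω ∂μ, ∀ᶠ n in atTop, ω ∉ s n := by
  have hsum : Summable fun n => μ.real (s n) := hw.of_norm_bounded_eventually_nat <|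
    hs.mono fun n hn => by rwa [Real.norm_of_nonneg measureReal_nonneg]
  refine ae_eventually_notMem ?_
  rw [tsum_congr fun n => (ofReal_measureReal (μ := μ) (s := s n)).symm,
    ← ENNReal.ofReal_tsum_of_nonneg (fun _ => measureReal_nonneg) hsum]
  exact ENNReal.ofReal_ne_top

lemma ae_eventually_forall_le_of_summable {Y : ℕ → ℕ → Ω → ℝ} {x p : ℕ → ℝ}
    (hp : Summable fun n : ℕ => (n : ℝ) * p n)
    (htail : ∀ᶠ n in atTop, ∀ k ≤ n, μ.real {ω | x n < Y n k ω} ≤ p n) :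
    ∀ᵐ ω ∂μ, ∀ᶠ n in atTop, ∀ k ≤ n, Y n k ω ≤ x n := by
  have hunion : ∀ᶠ n in atTop,
      μ.real (⋃ k ∈ Finset.range (n + 1), {ω | x n < Y n k ω}) ≤ 2 * (n * p n) := by
    filter_upwards [htail, eventually_ge_atTop 1] with n hn hn1
    have hp0 : 0 ≤ p n := measureReal_nonneg.trans (hn 0 n.zero_le)
    have hn1' : (1 : ℝ) ≤ n := by exact_mod_cast hn1
    calc _ ≤ ∑ k ∈ Finset.range (n + 1), μ.real {ω | x n < Y n k ω} :=
          measureReal_biUnion_finset_le _ _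
      _ ≤ ∑ _k ∈ Finset.range (n + 1), p n :=
          Finset.sum_le_sum fun k hk => hn k (Nat.lt_succ_iff.1 (Finset.mem_range.1 hk))
      _ ≤ 2 * (n * p n) := by
          rw [Finset.sum_const, Finset.card_range, nsmul_eq_mul]
          push_cast
          nlinarith
  filter_upwards [ae_eventually_notMem_of_summable (hp.mul_left 2) hunion] with ω hω
  filter_upwards [hω] with n hn k hk
  simp only [mem_iUnion, Finset.mem_range, mem_ofPred_eq, not_exists, not_lt] at hn
  exact hn k (Nat.lt_succ_of_le hk)

lemma ae_eventually_exists_lt_of_iIndepFun {Y : ℕ → ℕ → Ω → ℝ} {x : ℕ → ℝ} {r : ℝ}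
    (hr₀ : 0 ≤ r) (hr₁ : r < 1)
    (hindep : ∀ᶠ n in atTop, iIndepFun (fun (k : Fin (n + 1)) ω => Y n k ω) μ)
    (hsmall : ∀ᶠ n in atTop, ∀ k ≤ n, μ.real {ω | Y n k ω ≤ x n} ≤ r) :
    ∀ᵐ ω ∂μ, ∀ᶠ n in atTop, ∃ k ≤ n, x n < Y n k ω := by
  have hinter : ∀ᶠ n in atTop,
      μ.real (⋂ k ∈ (Finset.univ : Finset (Fin (n + 1))), Y n k ⁻¹' Iic (x n)) ≤ r ^ (n + 1) := by
    filter_upwards [hindep, hsmall] with n hind hn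
    calc _ = ∏ k : Fin (n + 1), μ.real (Y n k ⁻¹' Iic (x n)) := by
          rw [measureReal_def, hind.measure_inter_preimage_eq_mul _ fun _ _ => measurableSet_Iic,
            ENNReal.toReal_prod]
          rfl
      _ ≤ ∏ _k : Fin (n + 1), r :=
          Finset.prod_le_prod (fun _ _ => measureReal_nonneg) fun k _ => hn k k.is_le
      _ = r ^ (n + 1) := by simp
  filter_upwards [ae_eventually_notMem_of_summable
    ((summable_nat_add_iff 1).2 (summable_geometric_of_lt_one hr₀ hr₁)) hinter] with ω hω
  filter_upwards [hω] with n hn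
  simp only [Finset.mem_univ, iInter_true, mem_iInter, mem_preimage, mem_Iic, not_forall,
    not_le] at hn
  obtain ⟨k, hk⟩ := hn
  exact ⟨k, k.is_le, hk⟩

end BorelCantelli

theorem tendsto_max_abs_rpow_one_triangular_general
    {Ω : Type*} [MeasurableSpace Ω] (μ : Measure Ω) [IsProbabilityMeasure μ]
    (A : ℕ → ℕ → Ω → ℂ) (hA : ∀ n k, Measurable (A n k))
    (N : ℕ)
    (hindep : ∀ n, N ≤ n →
      ProbabilityTheory.iIndepFun (m := fun _ : Fin (n + 1) => (inferInstance : MeasurableSpace ℝ))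
        (fun k ω => ‖A n k ω‖) μ)
    (a : ℝ) (ha : 1 < a) (f : ℝ → ℝ)
    (hf_mem : ∀ x ∈ Set.Ici a, f x ∈ Set.Icc (0 : ℝ) 1)
    (hf_anti : AntitoneOn (fun x => f x * Real.log x) (Set.Ici a))
    (hf_int : IntegrableOn (fun x => f x * Real.log x / x) (Set.Ici a))
    (htail : ∀ n, N ≤ n → ∀ k ≤ n, ∀ x ∈ Set.Ici a,
      1 - (μ {ω | ‖A n k ω‖ ≤ x}).toReal ≤ f x)
    (N' : ℕ) (b : ℝ) (hb0 : 0 < b) (g : ℝ → ℝ)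
    (hg_mono : MonotoneOn g (Set.Icc 0 b))
    (hg_mem : ∀ x ∈ Set.Icc 0 b, g x ∈ Set.Icc (0 : ℝ) 1)
    (hg_int : IntegrableOn (fun x => g x / x) (Set.Ioc 0 b))
    (hsmall : ∀ n, N' ≤ n → ∀ k ≤ n, ∀ x ∈ Set.Icc 0 b,
      (μ {ω | ‖A n k ω‖ ≤ x}).toReal ≤ g x) :
    ∀ᵐ ω ∂μ,
      Tendsto
        (fun n : ℕ =>
          ((Finset.range (n + 1)).sup' Finset.nonempty_range_add_one
              fun k => ‖A n k ω‖) ^ (1 / (n : ℝ)))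
        atTop (nhds 1) := by
  have hupper (c : ℝ) (hc : 1 < c) : ∀ᵐ ω ∂μ, ∀ᶠ n in atTop, ∀ k ≤ n, ‖A n k ω‖ ≤ c ^ n := by
    refine ae_eventually_forall_le_of_summable
      (summable_natCast_mul_comp_pow ha.le hc (fun x hx => (hf_mem x hx).1) hf_anti hf_int) ?_
    obtain ⟨m, hm⟩ := pow_unbounded_of_one_lt a hc
    filter_upwards [eventually_ge_atTop N, eventually_ge_atTop m] with n hN hmn k hk
    have hcompl : {ω | c ^ n < ‖A n k ω‖} = {ω | ‖A n k ω‖ ≤ c ^ n}ᶜ := by ext; simp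
    rw [hcompl, probReal_compl_eq_one_sub (measurableSet_le (hA n k).norm measurable_const)]
    exact htail n hN k hk _ (hm.le.trans (pow_le_pow_right₀ hc.le hmn))
  have hlower (c : ℝ) (hc0 : 0 < c) (hc1 : c < 1) :
      ∀ᵐ ω ∂μ, ∀ᶠ n in atTop, ∃ k ≤ n, c ^ n < ‖A n k ω‖ := by
    have hpow := tendsto_pow_atTop_nhdsWithin_zero_of_lt_one hc0 hc1
    have hg := (tendsto_nhdsGT_zero_of_monotoneOn_of_integrableOn_div hb0
      (hg_mono.mono Ioc_subset_Icc_self) (fun x hx => (hg_mem x (Ioc_subset_Icc_self hx)).1)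
      hg_int).comp hpow
    refine ae_eventually_exists_lt_of_iIndepFun (r := 1 / 2) (by norm_num) (by norm_num)
      (eventually_atTop.2 ⟨N, hindep⟩) ?_
    filter_upwards [eventually_ge_atTop N', hg.eventually (eventually_le_nhds one_half_pos),
      (tendsto_pow_atTop_nhds_zero_of_lt_one hc0.le hc1).eventually (eventually_le_nhds hb0)]
      with n hN' hgn hcb k hk
    exact (hsmall n hN' k hk _ ⟨(pow_pos hc0 n).le, hcb⟩).trans hgn
  filter_upwards [ae_all_iff.2 fun q : ℚ => eventually_imp_distrib_left.2 (hupper q),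
    ae_all_iff.2 fun q : ℚ => eventually_imp_distrib_left.2 fun hq0 =>
      eventually_imp_distrib_left.2 (hlower q hq0)] with ω hU hL
  refine tendsto_rpow_one_div_of_pow_bounds (fun q hq => (hU q hq).mono fun n hn => ?_)
    fun q hq0 hq1 => (hL q hq0 hq1).mono fun n ⟨k, hk, hlt⟩ => ?_
  · exact Finset.sup'_le _ _ fun k hk => hn k (Nat.lt_succ_iff.1 (Finset.mem_range.1 hk))
  · exact hlt.trans_le
      (Finset.le_sup' (fun k => ‖A n k ω‖) (Finset.mem_range.2 (Nat.lt_succ_of_le hk)))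

/-- Lemma 4.3, limit (4.13). Let `A k n` (for `0 ≤ k ≤ n`) be a triangular
array of complex random variables, `A n k` denoting `A_{k,n}`, with distribution functions
`F_{k,n}(x) = μ {|A_{k,n}| ≤ x}`. Assume Assumption 1*: for all `n ≥ N` the moduli
`|A_{0,n}|, …, |A_{n,n}|` are jointly independent, and there are `a > 1` and
`f : [a,∞) → [0,1]` such that `x ↦ f(x) log x` is decreasing on `[a,∞)`,
`∫_a^∞ f(x) log x / x dx < ∞`, and `1 - F_{k,n}(x) ≤ f(x)` for `x ≥ a`, `0 ≤ k ≤ n`, `n ≥ N`.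
Assume Assumption 2*: there are `N'`, `0 < b < 1` and an increasing `g : [0,b] → [0,1]` with
`∫_0^b g(x)/x dx < ∞` and `F_{k,n}(x) ≤ g(x)` for `x ∈ [0,b]`, `0 ≤ k ≤ n`, `n ≥ N'`.
Then `lim_{n→∞} max_{0≤k≤n} |A_{k,n}|^{1/n} = 1` almost surely. -/
theorem tendsto_max_abs_rpow_one_triangular
    {Ω : Type*} [MeasurableSpace Ω] (μ : Measure Ω) [IsProbabilityMeasure μ]
    (A : ℕ → ℕ → Ω → ℂ) (hA : ∀ n k, Measurable (A n k))
    (N : ℕ)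
    (hindep : ∀ n, N ≤ n →
      ProbabilityTheory.iIndepFun (m := fun _ : Fin (n + 1) => (inferInstance : MeasurableSpace ℝ))
        (fun k ω => ‖A n k ω‖) μ)
    (a : ℝ) (ha : 1 < a) (f : ℝ → ℝ)
    (hf_mem : ∀ x ∈ Set.Ici a, f x ∈ Set.Icc (0 : ℝ) 1)
    (hf_anti : AntitoneOn (fun x => f x * Real.log x) (Set.Ici a))
    (hf_int : IntegrableOn (fun x => f x * Real.log x / x) (Set.Ici a))
    (htail : ∀ n, N ≤ n → ∀ k ≤ n, ∀ x ∈ Set.Ici a,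
      1 - (μ {ω | ‖A n k ω‖ ≤ x}).toReal ≤ f x)
    (N' : ℕ) (b : ℝ) (hb0 : 0 < b) (hb1 : b < 1) (g : ℝ → ℝ)
    (hg_mono : MonotoneOn g (Set.Icc 0 b))
    (hg_mem : ∀ x ∈ Set.Icc 0 b, g x ∈ Set.Icc (0 : ℝ) 1)
    (hg_int : IntegrableOn (fun x => g x / x) (Set.Ioc 0 b))
    (hsmall : ∀ n, N' ≤ n → ∀ k ≤ n, ∀ x ∈ Set.Icc 0 b,
      (μ {ω | ‖A n k ω‖ ≤ x}).toReal ≤ g x) :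
    ∀ᵐ ω ∂μ,
      Tendsto
        (fun n : ℕ =>
          ((Finset.range (n + 1)).sup' Finset.nonempty_range_add_one
              fun k => ‖A n k ω‖) ^ (1 / (n : ℝ)))
        atTop (nhds 1) :=
  tendsto_max_abs_rpow_one_triangular_general μ A hA N hindep a ha f hf_mem hf_anti hf_int htail N'
    b hb0 g hg_mono hg_mem hg_int hsmall
end

section
/- Let Z and W be independent complex-valued random variables on a common probability space and let t > 0. Then E[(log⁻|Z + W|)^t] ≤ sup_{z∈ℂ} E[(log⁻|Z − z|)^t], where both sides are interpreted as integrals of nonnegative (possibly infinite) functions. -/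
open MeasureTheory Filter ProbabilityTheory
open scoped ENNReal

/-- `log⁻ x = max (-log x) 0` for `x ≥ 0`, as an extended nonnegative real, with the convention
`log⁻ 0 = +∞`. -/
noncomputable def logNegE (x : ℝ) : ℝ≥0∞ :=
  if x = 0 then ⊤ else ENNReal.ofReal (-Real.log x)

lemma measurable_logNegE : Measurable logNegE :=
  Measurable.ite (measurableSet_eq_fun measurable_id measurable_const)
    measurable_const (ENNReal.measurable_ofReal.comp Real.measurable_log.neg)

/- Conditioning on `Y`: by independence the joint law is a product, and for each fixed value `y`
of `Y` the inner integral is one of the terms of the supremum. -/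
theorem ProbabilityTheory.IndepFun.lintegral_comp_add_le_iSup {Ω G : Type*} [MeasurableSpace Ω]
    {μ : Measure Ω} [IsProbabilityMeasure μ] [Add G] [MeasurableSpace G] [MeasurableAdd₂ G]
    {X Y : Ω → G} (hXY : IndepFun X Y μ) (hX : Measurable X) (hY : Measurable Y)
    {f : G → ℝ≥0∞} (hf : Measurable f) :
    ∫⁻ ω, f (X ω + Y ω) ∂μ ≤ ⨆ y, ∫⁻ ω, f (X ω + y) ∂μ := by
  have hmap : μ.map (fun ω ↦ (X ω, Y ω)) = (μ.map X).prod (μ.map Y) :=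
    (indepFun_iff_map_prod_eq_prod_map_map hX.aemeasurable hY.aemeasurable).mp hXY
  have : IsProbabilityMeasure (μ.map Y) := Measure.isProbabilityMeasure_map hY.aemeasurable
  calc ∫⁻ ω, f (X ω + Y ω) ∂μ
      = ∫⁻ y, ∫⁻ x, f (x + y) ∂(μ.map X) ∂(μ.map Y) := by
        rw [← lintegral_prod_symm (fun p : G × G ↦ f (p.1 + p.2))
          (hf.comp measurable_add).aemeasurable, ← hmap,
          lintegral_map (f := fun p : G × G ↦ f (p.1 + p.2)) (hf.comp measurable_add)
            (hX.prodMk hY)]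
    _ ≤ ∫⁻ _, ⨆ y, ∫⁻ ω, f (X ω + y) ∂μ ∂(μ.map Y) := by
        refine lintegral_mono fun y ↦ ?_
        rw [lintegral_map (f := fun x ↦ f (x + y)) (hf.comp (measurable_add_const y)) hX]
        exact le_iSup (fun y ↦ ∫⁻ ω, f (X ω + y) ∂μ) y
    _ = ⨆ y, ∫⁻ ω, f (X ω + y) ∂μ := by simp

theorem lintegral_logNeg_rpow_add_le_iSup_general
    {Ω : Type*} [MeasurableSpace Ω] (μ : Measure Ω) [IsProbabilityMeasure μ]
    (Z W : Ω → ℂ) (hZ : Measurable Z) (hW : Measurable W)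
    (hindep : ProbabilityTheory.IndepFun Z W μ)
    (t : ℝ) :
    ∫⁻ ω, logNegE ‖Z ω + W ω‖ ^ t ∂μ
      ≤ ⨆ z : ℂ, ∫⁻ ω, logNegE ‖Z ω - z‖ ^ t ∂μ := by
  have hf : Measurable fun x : ℂ ↦ logNegE ‖x‖ ^ t :=
    (measurable_logNegE.comp measurable_norm).pow_const t
  calc ∫⁻ ω, logNegE ‖Z ω + W ω‖ ^ t ∂μ
      ≤ ⨆ w : ℂ, ∫⁻ ω, logNegE ‖Z ω + w‖ ^ t ∂μ := hindep.lintegral_comp_add_le_iSup hZ hW hf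
    _ ≤ ⨆ z : ℂ, ∫⁻ ω, logNegE ‖Z ω - z‖ ^ t ∂μ := iSup_le fun w ↦ by
        simpa only [sub_neg_eq_add] using le_iSup (fun z ↦ ∫⁻ ω, logNegE ‖Z ω - z‖ ^ t ∂μ) (-w)

/-- If `Z` and `W` are independent complex random variables and `t > 0`, then
`E[(log⁻ |Z + W|)^t] ≤ sup_{z ∈ ℂ} E[(log⁻ |Z - z|)^t]`, both sides being lower integrals of
nonnegative (possibly infinite) functions. -/
theorem lintegral_logNeg_rpow_add_le_iSup
    {Ω : Type*} [MeasurableSpace Ω] (μ : Measure Ω) [IsProbabilityMeasure μ]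
    (Z W : Ω → ℂ) (hZ : Measurable Z) (hW : Measurable W)
    (hindep : ProbabilityTheory.IndepFun Z W μ)
    (t : ℝ) (ht : 0 < t) :
    ∫⁻ ω, logNegE ‖Z ω + W ω‖ ^ t ∂μ
      ≤ ⨆ z : ℂ, ∫⁻ ω, logNegE ‖Z ω - z‖ ^ t ∂μ :=
  lintegral_logNeg_rpow_add_le_iSup_general μ Z W hZ hW hindep t
end
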